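/- Let X be a compact Riemannian manifold and let Y ⊂ X be a shortest noncontractible closed curve in X, of length l. Divide Y into four consecutive arcs s_{+1}, s_{+2}, s_{-1}, s_{-2} each of length l/4 (opposite arcs being s_{+i} and s_{-i}). Then the distance in X between each pair of opposite arcs satisfies dist_X(s_{-i}, s_{+i}) ≥ l/4 for i = 1, 2. -/

import Mathlib

open CategoryTheory Metric
open scoped BigOperators
noncomputable section

/-! ## Singular homology (via the singular simplicial set and the alternating face map complex) -/

def SHfun (R : Type) [CommRing R] (n : ℕ) : TopCat.{0} ⥤ ModuleCat R :=
  TopCat.toSSet ⋙ ((SimplicialObject.whiskering _ _).obj (ModuleCat.free R)) ⋙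
    AlgebraicTopology.alternatingFaceMapComplex _ ⋙ HomologicalComplex.homologyFunctor _ _ n

/-- `n`-th singular homology of a topological space, with coefficients in `R`. -/
def SH (R : Type) [CommRing R] (n : ℕ) (X : Type) [TopologicalSpace X] : Type :=
  (SHfun R n).obj (TopCat.of X)

instance (R : Type) [CommRing R] (n : ℕ) (X : Type) [TopologicalSpace X] :
    AddCommGroup (SH R n X) := by unfold SH; infer_instance

instance (R : Type) [CommRing R] (n : ℕ) (X : Type) [TopologicalSpace X] :
    Module R (SH R n X) := by unfold SH; infer_instance

/-- The map induced on singular homology by a continuous map. -/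
def SHmap (R : Type) [CommRing R] (n : ℕ) {X Y : Type} [TopologicalSpace X] [TopologicalSpace Y]
    (f : C(X, Y)) : SH R n X → SH R n Y :=
  fun h => (SHfun R n).map (show TopCat.of X ⟶ TopCat.of Y from TopCat.ofHom f) h

/-! ## Metric extensions and the filling radius -/

/-- The canonical inclusion of `X` into the open `r`-thickening of the image of an
isometric embedding `ι : X → Z`. -/
def inclThickening {X Z : Type} [MetricSpace X] [MetricSpace Z] (ι : X → Z)
    (hι : Isometry ι) {r : ℝ} (hr : 0 < r) : C(X, Metric.thickening r (Set.range ι)) :=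
  ⟨fun x => ⟨ι x, Metric.self_subset_thickening hr _ ⟨x, rfl⟩⟩,
    (hι.continuous).subtype_mk _⟩

/-- `FillRadGE R n h r` : the filling radius of the metric space `X`, measured with respect to
the homology class `h` (to be thought of as the fundamental class of `X`), is at least `r` :
for every `r' < r` and every metric extension `Z ⊇ X`, the image of `h` does not vanish in the
open `r'`-neighbourhood of `X` inside `Z`. -/
def FillRadGE (R : Type) [CommRing R] (n : ℕ) {X : Type} [MetricSpace X]
    (h : SH R n X) (r : ℝ) : Prop :=
  ∀ r' : ℝ, ∀ hr' : 0 < r', r' < r →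
    ∀ (Z : Type) (_ : MetricSpace Z) (ι : X → Z) (hι : Isometry ι),
      SHmap R n (inclThickening ι hι hr') h ≠ 0

/-- `FillRadLE R n h r` : the filling radius of `X` w.r.t. the class `h` is at most `r` :
for every `r' > r` there is a metric extension of `X` in whose `r'`-neighbourhood of `X`
the class `h` dies. -/
def FillRadLE (R : Type) [CommRing R] (n : ℕ) {X : Type} [MetricSpace X]
    (h : SH R n X) (r : ℝ) : Prop :=
  ∀ r' : ℝ, ∀ hr' : 0 < r', r < r' →
    ∃ (Z : Type) (_ : MetricSpace Z) (ι : X → Z) (hι : Isometry ι),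
      SHmap R n (inclThickening ι hι hr') h = 0

/-! ## Uniform contractibility / acyclicity -/

/-- A (uniform) contractibility control function for the metric space `X` :
every ball `B_x(r)` is contractible inside `B_x(R(r))`. -/
structure UnifContractible (X : Type) [MetricSpace X] where
  R : ℝ → ℝ
  le : ∀ r, r ≤ R r
  contr : ∀ (x : X) (r : ℝ), 0 < r →
    (⟨Set.inclusion (ball_subset_ball (le r)), continuous_inclusion _⟩ :
      C(ball x r, ball x (R r))).Nullhomotopic

/-- A (uniform) acyclicity control function for the metric space `X` : the inclusion
homomorphisms `H_i(B_x(r)) → H_i(B_x(R(r)))` vanish for all `i ≥ 1`, with coefficients `A`. -/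
structure UnifAcyclic (A : Type) [CommRing A] (X : Type) [MetricSpace X] where
  R : ℝ → ℝ
  le : ∀ r, r ≤ R r
  acyclic : ∀ (x : X) (r : ℝ) (i : ℕ), 1 ≤ i → ∀ h : SH A i (ball x r),
    SHmap A i (⟨Set.inclusion (ball_subset_ball (le r)), continuous_inclusion _⟩ :
      C(ball x r, ball x (R r))) h = 0

/-! ## Abstract Riemannian manifolds and warped toral extensions -/

/-- An abstract Riemannian manifold : a metric space together with the Riemannian data
(dimension, scalar curvature, Riemannian measure, Laplacian, inner products of gradients,
smoothness predicate) used in the statements. -/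
structure RiemSpace where
  M : Type
  [met : MetricSpace M]
  dim : ℕ
  Sc : M → ℝ
  [mble : MeasurableSpace M]
  vol : MeasureTheory.Measure M
  laplacian : (M → ℝ) → M → ℝ
  gradInner : (M → ℝ) → (M → ℝ) → M → ℝ
  Smooth : (M → ℝ) → Prop

attribute [instance] RiemSpace.met RiemSpace.mble

/-- The scalar curvature of the iterated warped product
`g* = g + φ₁² dt₁² + ⋯ + φ_N² dt_N²` on `X × ℝᴺ`, as a function on `X` :
`Sc(g*) = Sc(g) − 2 Σᵢ Δφᵢ/φᵢ − 2 Σ_{i<j} ⟨∇ log φᵢ, ∇ log φⱼ⟩`. -/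
def warpedScFormula (X : RiemSpace) {N : ℕ} (φ : Fin N → X.M → ℝ) (x : X.M) : ℝ :=
  X.Sc x - 2 * ∑ i, X.laplacian (φ i) x / φ i x
    - 2 * ∑ i : Fin N, ∑ j : Fin N, if (i : ℕ) < (j : ℕ) then
        X.gradInner (fun y => Real.log (φ i y)) (fun y => Real.log (φ j y)) x else 0

/-- A warped `𝕋ᴺ`-extension of `X` : the manifold `X × ℝᴺ` with the iterated warped product
metric `g + Σ φᵢ² dtᵢ²`, recorded through its warping functions and its scalar curvature
(an `ℝᴺ`-invariant function, regarded as a function on `X`). -/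
structure WarpedExtension (X : RiemSpace) (N : ℕ) where
  φ : Fin N → X.M → ℝ
  φ_pos : ∀ i x, 0 < φ i x
  φ_smooth : ∀ i, X.Smooth (φ i)
  Sc : X.M → ℝ
  sc_eq : ∀ x, Sc x = warpedScFormula X φ x

/-- A closed `k`-dimensional submanifold of (the abstract Riemannian manifold) `X`, with its
own induced Riemannian structure; the embedding does not increase distances from the intrinsic
metric of `Y` to the ambient metric of `X`. -/
structure Subman (X : RiemSpace) (k : ℕ) where
  Y : RiemSpace
  emb : Y.M → X.M
  emb_cont : Continuous emb
  emb_inj : Function.Injective emb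
  emb_short : ∀ a b, dist (emb a) (emb b) ≤ dist a b
  dim_eq : Y.dim = k
  cpt : CompactSpace Y.M

/-- The length of a path in a metric space, via total variation. -/
def pathLength {X : Type} [PseudoMetricSpace X] {x y : X} (p : Path x y) : ENNReal :=
  eVariationOn p.extend (Set.Icc (0 : ℝ) 1)

/-- `X` is a path (length) metric space : any two points are joined by paths of length
arbitrarily close to their distance. -/
def IsPathMetric (X : Type) [MetricSpace X] : Prop :=
  ∀ x y : X, ∀ ε : ℝ, 0 < ε → ∃ p : Path x y, pathLength p ≤ ENNReal.ofReal (dist x y + ε)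

/-- The length of a closed curve `γ : ℝ/ℤ → X`. -/
def loopLength {X : Type} [PseudoMetricSpace X] (γ : C(AddCircle (1 : ℝ), X)) : ENNReal :=
  eVariationOn (fun t : ℝ => γ (t : AddCircle (1 : ℝ))) (Set.Icc (0 : ℝ) 1)

/-!
Suppose two points `γ s`, `γ t` were closer than both arcs of `γ` between them, and join them by
a path `p` shorter than either arc. Closing each arc with `p` gives two closed curves shorter than
`γ`, hence nullhomotopic. In the fundamental groupoid the first one says that the arc from `s` to
`t` is homotopic to `p`; substituting this into the second one shows that `γ` itself is
nullhomotopic. Between opposite quarter-arcs, each of the two arcs contains a full quarter, of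
length `l / 4`.
-/

open Set

namespace Path.Homotopic.Quotient

variable {Y : Type*} [TopologicalSpace Y] {x y : Y}

theorem eq_refl_of_trans_eq {a : Path.Homotopic.Quotient x x} {e : Path.Homotopic.Quotient x y}
    (h : a.trans e = e) : a = refl x :=
  calc a = (a.trans e).trans e.symm := by rw [trans_assoc, trans_symm, trans_refl]
    _ = refl x := by rw [h, trans_symm]

theorem eq_of_trans_symm_eq_refl {a p : Path.Homotopic.Quotient x y}
    (h : a.trans p.symm = refl x) : a = p :=
  calc a = (a.trans p.symm).trans p := by rw [trans_assoc, symm_trans, trans_refl]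
    _ = p := by rw [h, refl_trans]

end Path.Homotopic.Quotient

theorem ContinuousMap.Nullhomotopic.map_homotopic_refl {Y Z : Type*} [TopologicalSpace Y]
    [TopologicalSpace Z] {f : C(Y, Z)} (hf : f.Nullhomotopic) {y : Y} (P : Path y y) :
    (P.map f.continuous).Homotopic (Path.refl (f y)) := by
  obtain ⟨z, ⟨F⟩⟩ := hf
  have h := (Path.Homotopic.map_trans_evalAt F P).trans (Path.Homotopic.trans_refl _)
  rw [← Path.Homotopic.Quotient.eq, Path.Homotopic.Quotient.mk_trans] at h
  rw [← Path.Homotopic.Quotient.eq, Path.Homotopic.Quotient.mk_refl]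
  exact Path.Homotopic.Quotient.eq_refl_of_trans_eq h

section ClosedCurve

variable {X : Type*} [TopologicalSpace X]

def AddCircle.unitLoop : Path (0 : AddCircle (1 : ℝ)) 0 where
  toFun t := ((t : ℝ) : AddCircle (1 : ℝ))
  source' := by simp
  target' := by simp

def Path.closedCurve {x : X} (r : Path x x) : C(AddCircle (1 : ℝ), X) :=
  ⟨AddCircle.liftIco 1 0 r.extend,
    AddCircle.liftIco_zero_continuous (by simp) r.continuous_extend.continuousOn⟩

theorem Path.closedCurve_coe {x : X} (r : Path x x) (t : unitInterval) :
    r.closedCurve (t : ℝ) = r t := by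
  rcases t.2.2.eq_or_lt with h | h
  · obtain rfl : t = 1 := Subtype.ext h
    simpa [Path.closedCurve, AddCircle.coe_period] using
      AddCircle.liftIco_zero_coe_apply (f := r.extend) (p := (1 : ℝ)) (x := 0) (by simp)
  · exact (AddCircle.liftIco_zero_coe_apply ⟨t.2.1, h⟩).trans (r.extend_apply t.2)

theorem Path.Homotopic.closedCurve {x : X} {r r' : Path x x} (h : r.Homotopic r') :
    r.closedCurve.Homotopic r'.closedCurve := by
  obtain ⟨H⟩ := h
  -- Curried, `H` is a loop in `C(I, X)`, which descends to the circle like `r` and `r'` do.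
  let F : C(ℝ, C(unitInterval, X)) :=
    ContinuousMap.curry ⟨fun vs => H (vs.2, Set.projIcc 0 1 zero_le_one vs.1), by fun_prop⟩
  have hF : F 0 = F 1 := by ext s; simp [F]
  have hG : Continuous (AddCircle.liftIco 1 0 F) :=
    AddCircle.liftIco_zero_continuous hF F.continuous.continuousOn
  refine ⟨⟨⟨fun sz => AddCircle.liftIco 1 0 F sz.2 sz.1, by fun_prop⟩, fun z => ?_, fun z => ?_⟩⟩
  · have : r.extend = (fun c => c 0) ∘ F := by funext v; simp [F, Path.extend, Set.IccExtend]
    exact congrArg (AddCircle.liftIco 1 0 · z) this.symm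
  · have : r'.extend = (fun c => c 1) ∘ F := by funext v; simp [F, Path.extend, Set.IccExtend]
    exact congrArg (AddCircle.liftIco 1 0 · z) this.symm

theorem Path.nullhomotopic_closedCurve {x : X} {r : Path x x} (h : r.Homotopic (Path.refl x)) :
    r.closedCurve.Nullhomotopic :=
  ⟨x, h.closedCurve⟩

theorem Path.homotopic_refl_of_nullhomotopic_closedCurve {x : X} (r : Path x x)
    (h : r.closedCurve.Nullhomotopic) : r.Homotopic (Path.refl x) := by
  have hmap := h.map_homotopic_refl AddCircle.unitLoop
  rw [← Path.Homotopic.Quotient.eq] at hmap ⊢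
  have hr := Path.Homotopic.hpath_hext (p₁ := r)
    (p₂ := AddCircle.unitLoop.map r.closedCurve.continuous) fun t => (r.closedCurve_coe t).symm
  have hrefl := Path.Homotopic.hpath_hext (p₁ := Path.refl (r.closedCurve 0))
    (p₂ := Path.refl x) fun _ => by simpa using r.closedCurve_coe 0
  exact eq_of_heq (hr.trans ((heq_of_eq hmap).trans hrefl))

end ClosedCurve

section Segment

variable {X : Type*} [TopologicalSpace X] {f : ℝ → X} (hf : Continuous f)

def segmentPath (a c : ℝ) {u v : X} (hu : f a = u) (hv : f c = v) : Path u v :=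
  ((Path.segment a c).map hf).cast hu.symm hv.symm

theorem segmentPath_homotopic_trans {a b c : ℝ} {u v w : X} (hu : f a = u) (hv : f b = v)
    (hw : f c = w) :
    (segmentPath hf a c hu hw).Homotopic
      ((segmentPath hf a b hu hv).trans (segmentPath hf b c hv hw)) := by
  subst hu hv hw
  simp only [segmentPath, Path.cast_rfl_rfl, ← Path.map_trans]
  exact (SimplyConnectedSpace.paths_homotopic _ _).map ⟨f, hf⟩

theorem eq_closedCurve_segmentPath (γ : C(AddCircle (1 : ℝ), X))
    (hg : Continuous fun t : ℝ => γ t) (h0 : γ (0 : ℝ) = γ 0) (h1 : γ (1 : ℝ) = γ 0) :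
    γ = (segmentPath hg 0 1 h0 h1).closedCurve := by
  ext z
  obtain ⟨t, ht, rfl⟩ := AddCircle.eq_coe_Ico z
  have := (segmentPath hg 0 1 h0 h1).closedCurve_coe ⟨t, Ico_subset_Icc_self ht⟩
  simp_all [segmentPath, AffineMap.lineMap_apply_ring]

end Segment

section Length

variable {X : Type} [PseudoMetricSpace X]

theorem eVariationOn_Icc_add_Icc {E : Type*} [PseudoEMetricSpace E] (f : ℝ → E) {a b c : ℝ}
    (hab : a ≤ b) (hbc : b ≤ c) :
    eVariationOn f (Icc a b) + eVariationOn f (Icc b c) = eVariationOn f (Icc a c) := by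
  simpa using eVariationOn.Icc_add_Icc f (s := univ) hab hbc trivial

theorem pathLength_trans {x y z : X} (p : Path x y) (q : Path y z) :
    pathLength (p.trans q) = pathLength p + pathLength q := by
  have first : eVariationOn (p.trans q).extend (Icc 0 (1 / 2)) = pathLength p := by
    rw [eVariationOn.eq_of_eqOn (f' := p.extend ∘ (2 * ·))
        fun t ht => p.extend_trans_of_le_half q ht.2,
      eVariationOn.comp_eq_of_monotoneOn _ _ fun s _ t _ hst => by linarith,
      image_mul_left_Icc zero_le_two (by norm_num)]
    norm_num [pathLength]
  have second : eVariationOn (p.trans q).extend (Icc (1 / 2) 1) = pathLength q := by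
    rw [eVariationOn.eq_of_eqOn (f' := q.extend ∘ (2 * · + -1))
        fun t ht => (p.extend_trans_of_half_le q ht.1).trans (by simp [sub_eq_add_neg]),
      eVariationOn.comp_eq_of_monotoneOn _ _ fun s _ t _ hst => by linarith,
      image_affine_Icc' two_pos]
    norm_num [pathLength]
  rw [← first, ← second, eVariationOn_Icc_add_Icc _ (by norm_num) (by norm_num)]
  rfl

theorem pathLength_symm {x y : X} (p : Path x y) : pathLength p.symm = pathLength p := by
  rw [pathLength, Path.extend_symm, ← Function.comp_def,
    eVariationOn.comp_eq_of_antitoneOn _ _ fun s _ t _ hst => by linarith,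
    image_const_sub_Icc]
  norm_num [pathLength]

theorem loopLength_closedCurve {x : X} (r : Path x x) : loopLength r.closedCurve = pathLength r :=
  eVariationOn.eq_of_eqOn fun t ht => (r.closedCurve_coe ⟨t, ht⟩).trans (r.extend_apply ht).symm

theorem pathLength_segmentPath {f : ℝ → X} (hf : Continuous f) {a c : ℝ} (hac : a ≤ c) {u v : X}
    (hu : f a = u) (hv : f c = v) :
    pathLength (segmentPath hf a c hu hv) = eVariationOn f (Icc a c) := by
  have : EqOn (segmentPath hf a c hu hv).extend (f ∘ AffineMap.lineMap a c) (Icc 0 1) := by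
    intro t ht
    simp [segmentPath, Path.extend_apply _ ht]
  rw [pathLength, eVariationOn.eq_of_eqOn this,
    eVariationOn.comp_eq_of_monotoneOn _ _ ((AffineMap.lineMap_mono hac).monotoneOn _),
    ← segment_eq_image_lineMap, segment_eq_Icc hac]

end Length

section ShortestNoncontractible

variable {X : Type} [MetricSpace X]

theorem IsPathMetric.exists_pathLength_lt (hX : IsPathMetric X) {x y : X} {c : ENNReal}
    (h : edist x y < c) : ∃ p : Path x y, pathLength p < c := by
  obtain ⟨r, -, hxr, hrc⟩ := ENNReal.lt_iff_exists_real_btwn.1 h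
  rw [edist_dist, ENNReal.ofReal_lt_ofReal_iff'] at hxr
  obtain ⟨p, hp⟩ := hX x y (r - dist x y) (by linarith)
  exact ⟨p, hp.trans_lt (by rwa [add_sub_cancel])⟩

def IsShortestNoncontractible (γ : C(AddCircle (1 : ℝ), X)) : Prop :=
  ¬ γ.Nullhomotopic ∧ ∀ δ : C(AddCircle (1 : ℝ), X), loopLength δ < loopLength γ → δ.Nullhomotopic

theorem IsShortestNoncontractible.min_arcLength_le_edist (hX : IsPathMetric X)
    {γ : C(AddCircle (1 : ℝ), X)} (hγ : IsShortestNoncontractible γ) (hfin : loopLength γ ≠ ⊤)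
    {s t : ℝ} (hs : 0 ≤ s) (hst : s ≤ t) (ht : t ≤ 1) :
    min (eVariationOn (fun u : ℝ => γ u) (Icc s t))
        (eVariationOn (fun u : ℝ => γ u) (Icc 0 s) + eVariationOn (fun u : ℝ => γ u) (Icc t 1))
      ≤ edist (γ s) (γ t) := by
  set g : ℝ → X := fun u => γ u
  set inner := eVariationOn g (Icc s t)
  set outer := eVariationOn g (Icc 0 s) + eVariationOn g (Icc t 1)
  have hg : Continuous g := γ.continuous.comp (AddCircle.continuous_mk' 1)
  have h0 : g 0 = γ 0 := by simp [g]
  have h1 : g 1 = γ 0 := by simp [g, AddCircle.coe_period]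
  have hsplit : loopLength γ = inner + outer := by
    rw [loopLength, ← eVariationOn_Icc_add_Icc _ hs (hst.trans ht),
      ← eVariationOn_Icc_add_Icc _ hst ht]
    ring
  obtain ⟨hinner, houter⟩ := ENNReal.add_ne_top.1 (hsplit ▸ hfin)
  by_contra! hlt
  obtain ⟨p, hp⟩ := hX.exists_pathLength_lt hlt
  let A := segmentPath hg s t rfl rfl
  let S₀ := segmentPath hg 0 s h0 rfl
  let S₁ := segmentPath hg t 1 rfl h1
  have hA : (A.trans p.symm).Homotopic (Path.refl _) := by
    refine Path.homotopic_refl_of_nullhomotopic_closedCurve _ (hγ.2 _ ?_)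
    rw [loopLength_closedCurve, pathLength_trans, pathLength_symm, pathLength_segmentPath hg hst,
      hsplit]
    exact ENNReal.add_lt_add_left hinner (hp.trans_le (min_le_right _ _))
  have hB : ((S₀.trans p).trans S₁).Homotopic (Path.refl _) := by
    refine Path.homotopic_refl_of_nullhomotopic_closedCurve _ (hγ.2 _ ?_)
    rw [loopLength_closedCurve, pathLength_trans, pathLength_trans,
      pathLength_segmentPath hg hs, pathLength_segmentPath hg ht, hsplit, add_right_comm,
      add_comm inner]
    exact ENNReal.add_lt_add_left houter (hp.trans_le (min_le_left _ _))
  have hγ_split : (segmentPath hg 0 1 h0 h1).Homotopic ((S₀.trans A).trans S₁) :=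
    (segmentPath_homotopic_trans hg h0 rfl h1).trans
      ((segmentPath_homotopic_trans hg h0 rfl rfl).hcomp (.refl S₁))
  refine hγ.1 ((eq_closedCurve_segmentPath γ hg h0 h1).symm ▸ Path.nullhomotopic_closedCurve ?_)
  rw [← Path.Homotopic.Quotient.eq] at hA hB hγ_split ⊢
  simp only [Path.Homotopic.Quotient.mk_trans, Path.Homotopic.Quotient.mk_symm] at hA hB hγ_split ⊢
  rwa [hγ_split, Path.Homotopic.Quotient.eq_of_trans_symm_eq_refl hA]

end ShortestNoncontractible

theorem stmt_1_general (X : Type) [MetricSpace X] (hpath : IsPathMetric X)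
    (γ : C(AddCircle (1 : ℝ), X)) (l : ℝ)
    (hlen : loopLength γ = ENNReal.ofReal l)
    (hnc : ¬ γ.Nullhomotopic)
    (hshort : ∀ δ : C(AddCircle (1 : ℝ), X),
      loopLength δ < ENNReal.ofReal l → δ.Nullhomotopic)
    (harc : ∀ a : Fin 4,
      eVariationOn (fun t : ℝ => γ (t : AddCircle (1 : ℝ)))
        (Set.Icc ((a : ℝ) / 4) (((a : ℝ) + 1) / 4)) = ENNReal.ofReal (l / 4)) :
    (∀ s ∈ Set.Icc (0 : ℝ) (1 / 4), ∀ t ∈ Set.Icc (1 / 2 : ℝ) (3 / 4),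
      l / 4 ≤ dist (γ (s : AddCircle (1 : ℝ))) (γ (t : AddCircle (1 : ℝ)))) ∧
    (∀ s ∈ Set.Icc (1 / 4 : ℝ) (1 / 2), ∀ t ∈ Set.Icc (3 / 4 : ℝ) 1,
      l / 4 ≤ dist (γ (s : AddCircle (1 : ℝ))) (γ (t : AddCircle (1 : ℝ)))) := by
  set g : ℝ → X := fun t => γ t
  have hγ : IsShortestNoncontractible γ := ⟨hnc, hlen ▸ hshort⟩
  have key (s t : ℝ) (hs : 0 ≤ s) (hst : s ≤ t) (ht : t ≤ 1)
      (hinner : ENNReal.ofReal (l / 4) ≤ eVariationOn g (Icc s t))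
      (houter : ENNReal.ofReal (l / 4) ≤ eVariationOn g (Icc 0 s) + eVariationOn g (Icc t 1)) :
      l / 4 ≤ dist (γ s) (γ t) := by
    have := (le_min hinner houter).trans
      (hγ.min_arcLength_le_edist hpath (by simp [hlen]) hs hst ht)
    rwa [edist_dist, ENNReal.ofReal_le_ofReal_iff dist_nonneg] at this
  have quarter (a : Fin 4) {u v : ℝ} (hu : u ≤ a / 4) (hv : (a + 1) / 4 ≤ v) :
      ENNReal.ofReal (l / 4) ≤ eVariationOn g (Icc u v) :=
    harc a ▸ eVariationOn.mono g (Icc_subset_Icc hu hv)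
  refine ⟨fun s hs t ht => key s t hs.1 (by linarith [hs.2, ht.1]) (by linarith [ht.2]) ?_ ?_,
    fun s hs t ht => key s t (by linarith [hs.1]) (by linarith [hs.2, ht.1]) ht.2 ?_ ?_⟩
  · exact quarter 1 (by norm_num [hs.2]) (by norm_num [ht.1])
  · exact (quarter 3 (by norm_num [ht.2]) (by norm_num)).trans le_add_self
  · exact quarter 2 (by norm_num [hs.2]) (by norm_num [ht.1])
  · exact (quarter 0 (by norm_num) (by norm_num [hs.1])).trans le_self_add

/-- In a compact path metric space `X`, let `γ` be a shortest noncontractible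
closed curve, of length `l`, parametrized so that the four consecutive quarter-arcs
`γ([0,1/4]), γ([1/4,1/2]), γ([1/2,3/4]), γ([3/4,1])` each have length `l/4`.  Then the two
pairs of opposite arcs are at mutual distance `≥ l/4`. -/
theorem stmt_1 (X : Type) [MetricSpace X] [CompactSpace X] (hpath : IsPathMetric X)
    (γ : C(AddCircle (1 : ℝ), X)) (l : ℝ) (hl : 0 < l)
    (hlen : loopLength γ = ENNReal.ofReal l)
    (hnc : ¬ γ.Nullhomotopic)
    (hshort : ∀ δ : C(AddCircle (1 : ℝ), X),
      loopLength δ < ENNReal.ofReal l → δ.Nullhomotopic)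
    (harc : ∀ a : Fin 4,
      eVariationOn (fun t : ℝ => γ (t : AddCircle (1 : ℝ)))
        (Set.Icc ((a : ℝ) / 4) (((a : ℝ) + 1) / 4)) = ENNReal.ofReal (l / 4)) :
    (∀ s ∈ Set.Icc (0 : ℝ) (1 / 4), ∀ t ∈ Set.Icc (1 / 2 : ℝ) (3 / 4),
      l / 4 ≤ dist (γ (s : AddCircle (1 : ℝ))) (γ (t : AddCircle (1 : ℝ)))) ∧
    (∀ s ∈ Set.Icc (1 / 4 : ℝ) (1 / 2), ∀ t ∈ Set.Icc (3 / 4 : ℝ) 1,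
      l / 4 ≤ dist (γ (s : AddCircle (1 : ℝ))) (γ (t : AddCircle (1 : ℝ)))) :=
  stmt_1_general X hpath γ l hlen hnc hshort harc
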